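/- arXiv:math/0411052 — 2 statements merged into one kernel-verified Lean document; each statement's English description precedes it below -/
import Mathlib

section
/- Let A be a coin sequence containing at least one 1 and let A' be the sequence obtained from A by deleting every maximal block of consecutive 0's of even length and concatenating adjacent blocks of 1's. If (h_0, h_1, …, h_n) are the lengths of the successive maximal blocks of 1's in A' (so A' = 1^{h_0} 0 1^{h_1} 0 ⋯ 0 1^{h_n} with single 0's separating them), then S(A) = h_0 + Σ_{i=1}^n (−1)^i h_i − (n mod 2). -/
/-! Deleting a block `00` changes neither the signed sum (the sign flips twice) nor the parity
of the number of `0`s, so `S(A) = S(A')`. For `A' = 1^{h₀} 0 1^{h₁} 0 ⋯ 0 1^{hₙ}` the sign in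
front of `hᵢ` is `(-1)^i` and `A'` has exactly `n` zeros. -/

/-- Signed sum of the `true` entries of a list, the sign toggling at each `false`. -/
def signedSum : ℤ → List Bool → ℤ
  | _, [] => 0
  | s, (true :: l) => s + signedSum s l
  | s, (false :: l) => signedSum (-s) l

/-- The parity sum `S(A) = h₀ + ∑_{i=1}^n (-1)^{pᵢ} hᵢ - pₙ`, where
`A = 1^{h₀} 0^{t₁} 1^{h₁} ⋯ 0^{tₙ} 1^{hₙ}` and `pᵢ ≡ t₁ + ⋯ + tᵢ (mod 2)`. -/
def pS (A : List Bool) : ℤ :=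
  signedSum 1 A - ((A.count false % 2 : ℕ) : ℤ)

/-- Delete every maximal block of consecutive `0`s of even length, merging the
adjacent blocks of `1`s (each maximal block of `0`s is reduced modulo 2). -/
def squash : List Bool → List Bool
  | [] => []
  | true :: l => true :: squash l
  | false :: false :: l => squash l
  | false :: l => false :: squash l

/-- The sequence `1^{h 0} 0 1^{h 1} 0 ⋯ 0 1^{h n}` with single `0`s as separators. -/
def buildOnes (n : ℕ) (h : ℕ → ℕ) : List Bool :=
  List.replicate (h 0) true ++
    ((List.range n).map (fun i => false :: List.replicate (h (i + 1)) true)).flatten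

lemma signedSum_squash (A : List Bool) (s : ℤ) :
    signedSum s (squash A) = signedSum s A := by
  induction A using squash.induct generalizing s with
  | case1 => rfl
  | case2 l ih => simp [squash, signedSum, ih]
  | case3 l ih => simp [squash, signedSum, ih]
  | case4 l h ih => cases l with
    | nil => rfl
    | cons b l => cases b <;> simp_all [squash, signedSum]

lemma count_false_squash_mod_two (A : List Bool) :
    (squash A).count false % 2 = A.count false % 2 := by
  induction A using squash.induct with
  | case1 => rfl
  | case2 l ih => simpa [squash] using ih
  | case3 l ih => simp only [squash, List.count_cons_self]; omega
  | case4 l h ih => cases l with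
    | nil => rfl
    | cons b l => cases b <;> simp_all [squash, Nat.add_mod]

lemma pS_squash (A : List Bool) : pS (squash A) = pS A := by
  rw [pS, pS, signedSum_squash, count_false_squash_mod_two]

lemma signedSum_append (l m : List Bool) (s : ℤ) :
    signedSum s (l ++ m) = signedSum s l + signedSum ((-1) ^ l.count false * s) m := by
  induction l generalizing s with
  | nil => simp [signedSum]
  | cons b l ih =>
    cases b
    · simp [signedSum, ih, pow_succ]
    · simp [signedSum, ih, add_assoc]

lemma signedSum_replicate_true (k : ℕ) (s : ℤ) :
    signedSum s (List.replicate k true) = k * s := by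
  induction k with
  | zero => simp [signedSum]
  | succ k ih => rw [List.replicate_succ, signedSum, ih]; push_cast; ring

lemma buildOnes_succ (n : ℕ) (h : ℕ → ℕ) :
    buildOnes (n + 1) h = buildOnes n h ++ (false :: List.replicate (h (n + 1)) true) := by
  simp [buildOnes, List.range_succ]

lemma count_false_buildOnes (n : ℕ) (h : ℕ → ℕ) :
    (buildOnes n h).count false = n := by
  induction n with
  | zero => simp [buildOnes, List.count_replicate]
  | succ n ih => simp [buildOnes_succ, ih, List.count_replicate]

lemma signedSum_buildOnes (n : ℕ) (h : ℕ → ℕ) :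
    signedSum 1 (buildOnes n h) =
      (h 0 : ℤ) + ∑ i ∈ Finset.Icc 1 n, (-1 : ℤ) ^ i * (h i : ℤ) := by
  induction n with
  | zero => simp [buildOnes, signedSum_replicate_true]
  | succ n ih =>
    rw [buildOnes_succ, signedSum_append, ih, count_false_buildOnes,
      Finset.sum_Icc_succ_top (by omega), signedSum, signedSum_replicate_true, pow_succ]
    ring

lemma pS_buildOnes (n : ℕ) (h : ℕ → ℕ) :
    pS (buildOnes n h) =
      (h 0 : ℤ) + (∑ i ∈ Finset.Icc 1 n, (-1 : ℤ) ^ i * (h i : ℤ)) - ((n % 2 : ℕ) : ℤ) := by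
  rw [pS, signedSum_buildOnes, count_false_buildOnes]

theorem pS_eq_alternating_sum_general (A : List Bool)
    (n : ℕ) (h : ℕ → ℕ) (hsq : squash A = buildOnes n h) :
    pS A = (h 0 : ℤ) + (∑ i ∈ Finset.Icc 1 n, (-1 : ℤ) ^ i * (h i : ℤ)) - ((n % 2 : ℕ) : ℤ) := by
  rw [← pS_squash, hsq, pS_buildOnes]

/-- If deleting the even blocks of `0`s from `A` yields
`A' = 1^{h₀} 0 1^{h₁} 0 ⋯ 0 1^{hₙ}`, then `S(A) = h₀ + ∑ (-1)ⁱ hᵢ - (n mod 2)`. -/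
theorem pS_eq_alternating_sum (A : List Bool) (hA : true ∈ A)
    (n : ℕ) (h : ℕ → ℕ) (hsq : squash A = buildOnes n h) :
    pS A = (h 0 : ℤ) + (∑ i ∈ Finset.Icc 1 n, (-1 : ℤ) ^ i * (h i : ℤ)) - ((n % 2 : ℕ) : ℤ) :=
  pS_eq_alternating_sum_general A n h hsq
end

section
/- In the no-gaps linear coin-removal game, a coin sequence A containing at least one heads-up coin is removable if and only if its parity sum S(A) is congruent to 0 or 1 modulo 3. -/
/-- Flip the entry at index `j` (no-op if out of range). -/
def ngFlip (l : List Bool) (j : ℕ) : List Bool :=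
  l.set j (!(l.getD j false))

/-- One move in the no-gaps linear coin-removal game: remove a `true` entry at
position `i`, flipping the adjacent entries (if they exist) and closing the gap. -/
def ngStep (A B : List Bool) : Prop :=
  ∃ i, i < A.length ∧ A.getD i false = true ∧
    B = ((ngFlip (ngFlip A (i + 1)) (i - 1)).eraseIdx i)

/-- `Reducible A B`: some sequence of moves transforms `A` into `B`. -/
def Reducible : List Bool → List Bool → Prop :=
  Relation.ReflTransGen ngStep

/-- A sequence is removable if it reduces to the empty list. -/
def Removable (A : List Bool) : Prop :=
  Reducible A []


/-! ### Auxiliary definitions and lemmas -/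

/-- The sign `(-1)^{number of falses}`. -/
def eS : List Bool → ℤ
  | [] => 1
  | (true :: l) => eS l
  | (false :: l) => -eS l

lemma signedSum_mul (s : ℤ) (l : List Bool) : signedSum s l = s * signedSum 1 l := by
  induction l generalizing s with
  | nil => simp [signedSum]
  | cons a l ih =>
    cases a <;> simp only [signedSum]
    · rw [ih (-s), ih (-1)]; ring
    · rw [ih s, ih 1]; ring

lemma g_cons_true (l : List Bool) : signedSum 1 (true :: l) = 1 + signedSum 1 l := rfl

lemma g_cons_false (l : List Bool) : signedSum 1 (false :: l) = -signedSum 1 l := by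
  show signedSum (-1) l = _
  rw [signedSum_mul]; ring

lemma g_append (l m : List Bool) :
    signedSum 1 (l ++ m) = signedSum 1 l + eS l * signedSum 1 m := by
  induction l with
  | nil => simp [signedSum, eS]
  | cons a l ih =>
    cases a <;> simp only [List.cons_append, g_cons_true, g_cons_false, eS, ih] <;> ring

/-- count of falses, as an integer. -/
def cF (l : List Bool) : ℤ := (l.count false : ℤ)

lemma cF_nil : cF [] = 0 := rfl

lemma cF_cons_true (l : List Bool) : cF (true :: l) = cF l := by
  simp [cF, List.count_cons]

lemma cF_cons_false (l : List Bool) : cF (false :: l) = cF l + 1 := by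
  simp [cF, List.count_cons]

lemma cF_append (l m : List Bool) : cF (l ++ m) = cF l + cF m := by
  simp [cF, List.count_append]

lemma cF_nonneg (l : List Bool) : 0 ≤ cF l := Int.natCast_nonneg _

lemma eS_eq (l : List Bool) : eS l = 1 - 2 * (cF l % 2) := by
  induction l with
  | nil => simp [eS, cF_nil]
  | cons a l ih =>
    cases a
    · rw [show eS (false :: l) = -eS l from rfl, cF_cons_false, ih]
      omega
    · rw [show eS (true :: l) = eS l from rfl, cF_cons_true, ih]

lemma pS_eq (l : List Bool) : pS l = signedSum 1 l - cF l % 2 := by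
  unfold pS cF
  congr 1

/-! ### List manipulation lemmas for moves -/

lemma ngFlip_nil (k : ℕ) : ngFlip [] k = [] := by simp [ngFlip]

lemma ngFlip_cons_succ (a : Bool) (l : List Bool) (k : ℕ) :
    ngFlip (a :: l) (k + 1) = a :: ngFlip l k := by
  simp [ngFlip]

lemma ngFlip_cons_zero (a : Bool) (l : List Bool) :
    ngFlip (a :: l) 0 = (!a) :: l := by
  simp [ngFlip]

lemma ngFlip_append_add (L C : List Bool) (k : ℕ) :
    ngFlip (L ++ C) (L.length + k) = L ++ ngFlip C k := by
  induction L with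
  | nil => simp
  | cons a L ih =>
    have h : (a :: L).length + k = (L.length + k) + 1 := by simp; omega
    rw [h, List.cons_append, ngFlip_cons_succ, ih]
    rfl

lemma eraseIdx_append_add (L C : List Bool) (k : ℕ) :
    (L ++ C).eraseIdx (L.length + k) = L ++ C.eraseIdx k := by
  induction L with
  | nil => simp
  | cons a L ih =>
    have h : (a :: L).length + k = (L.length + k) + 1 := by simp; omega
    rw [h, List.cons_append, List.eraseIdx_cons_succ, ih]
    rfl

lemma getD_append_add (L C : List Bool) (k : ℕ) (d : Bool) :
    (L ++ C).getD (L.length + k) d = C.getD k d := by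
  induction L with
  | nil => simp
  | cons a L ih =>
    have h : (a :: L).length + k = (L.length + k) + 1 := by simp; omega
    rw [h, List.cons_append, List.getD_cons_succ, ih]

lemma moveB_zero (R : List Bool) :
    ((ngFlip (ngFlip (true :: R) (0 + 1)) (0 - 1)).eraseIdx 0) = ngFlip R 0 := by
  rw [show (0:ℕ) + 1 = 0 + 1 from rfl, ngFlip_cons_succ]
  rw [show (0:ℕ) - 1 = 0 from rfl, ngFlip_cons_zero, List.eraseIdx_cons_zero]

lemma moveB_mid (L : List Bool) (x : Bool) (R : List Bool) :
    ((ngFlip (ngFlip (L ++ x :: true :: R) (L.length + 1 + 1)) (L.length + 1 - 1)).eraseIdx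
      (L.length + 1)) = L ++ (!x) :: ngFlip R 0 := by
  have h2 : L.length + 1 + 1 = L.length + 2 := rfl
  rw [h2, ngFlip_append_add L _ 2, ngFlip_cons_succ, ngFlip_cons_succ]
  have h0 : L.length + 1 - 1 = L.length + 0 := rfl
  rw [h0, ngFlip_append_add L _ 0, ngFlip_cons_zero]
  rw [show L.length + 1 = L.length + 1 from rfl, eraseIdx_append_add L _ 1,
    List.eraseIdx_cons_succ, List.eraseIdx_cons_zero]

lemma ngStep_zero (R : List Bool) : ngStep (true :: R) (ngFlip R 0) :=
  ⟨0, by simp, rfl, (moveB_zero R).symm⟩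

lemma ngStep_mid (L : List Bool) (x : Bool) (R : List Bool) :
    ngStep (L ++ x :: true :: R) (L ++ (!x) :: ngFlip R 0) :=
  ⟨L.length + 1, by simp, by
    have := getD_append_add L (x :: true :: R) 1 false
    simpa using this, (moveB_mid L x R).symm⟩

/-- Structure of an arbitrary move. -/
lemma ngStep_cases {A B : List Bool} (h : ngStep A B) :
    (∃ R, A = true :: R ∧ B = ngFlip R 0) ∨
    (∃ L x R, A = L ++ x :: true :: R ∧ B = L ++ (!x) :: ngFlip R 0) := by
  obtain ⟨i, hi, hAi, hB⟩ := h
  cases i with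
  | zero =>
    left
    cases A with
    | nil => simp at hi
    | cons a A' =>
      simp only [List.getD_cons_zero] at hAi
      subst hAi
      exact ⟨A', rfl, by rw [hB, moveB_zero]⟩
  | succ j =>
    right
    have hj : j < A.length := by omega
    have hj1 : j + 1 < A.length := hi
    have hdecomp : A = A.take j ++ A[j] :: A[j+1] :: A.drop (j+2) := by
      conv_lhs => rw [← List.take_append_drop j A]
      rw [List.drop_eq_getElem_cons hj, List.drop_eq_getElem_cons hj1]
    have hAj1 : A[j+1] = true := by
      rw [List.getD_eq_getElem A false hj1] at hAi; exact hAi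
    rw [hAj1] at hdecomp
    refine ⟨A.take j, A[j], A.drop (j+2), hdecomp, ?_⟩
    have hlen : (A.take j).length = j := by
      rw [List.length_take]; omega
    rw [hB]
    conv_lhs => rw [hdecomp]
    have hm := moveB_mid (A.take j) A[j] (A.drop (j+2))
    rw [hlen] at hm
    exact hm

/-! ### Arithmetic: effect of a move on the parity sum -/

lemma pS_step_zero (R : List Bool) :
    (pS (true :: R) + pS (ngFlip R 0)) % 3 = 1 := by
  cases R with
  | nil => decide
  | cons y R₁ =>
    have hc := cF_nonneg R₁
    cases y
    · rw [ngFlip_cons_zero]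
      simp only [Bool.not_false, Bool.not_true]
      rw [pS_eq, pS_eq, g_cons_true, g_cons_false, g_cons_true,
        cF_cons_true, cF_cons_false, cF_cons_true]
      omega
    · rw [ngFlip_cons_zero]
      simp only [Bool.not_false, Bool.not_true]
      rw [pS_eq, pS_eq, g_cons_true, g_cons_true, g_cons_false,
        cF_cons_true, cF_cons_true, cF_cons_false]
      omega

lemma pS_step_mid (L : List Bool) (x : Bool) (R : List Bool) :
    (pS (L ++ x :: true :: R) - pS (L ++ (!x) :: ngFlip R 0)) % 3 = 0 := by
  have he := eS_eq L
  have hcL := cF_nonneg L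
  rcases Int.emod_two_eq (cF L) with h2 | h2 <;> rw [h2] at he
  all_goals {
    cases R with
    | nil =>
      cases x <;>
      · rw [pS_eq, pS_eq, g_append, g_append, cF_append, cF_append]
        simp only [g_cons_true, g_cons_false, cF_cons_true, cF_cons_false, Bool.not_true,
          Bool.not_false, ngFlip_nil, cF_nil]
        rw [show signedSum 1 ([] : List Bool) = 0 from rfl]
        rw [he]
        omega
    | cons y R₁ =>
      have hc := cF_nonneg R₁
      cases x <;> cases y <;>
      · rw [ngFlip_cons_zero, pS_eq, pS_eq, g_append, g_append, cF_append, cF_append]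
        simp only [g_cons_true, g_cons_false, cF_cons_true, cF_cons_false, Bool.not_true,
          Bool.not_false]
        rw [he]
        omega
  }

/-- Moves preserve the class `pS % 3 ∈ {0, 1}`. -/
lemma ngStep_pS {A B : List Bool} (h : ngStep A B) :
    (pS A % 3 = 0 ∨ pS A % 3 = 1) ↔ (pS B % 3 = 0 ∨ pS B % 3 = 1) := by
  rcases ngStep_cases h with ⟨R, hA, hB⟩ | ⟨L, x, R, hA, hB⟩
  · subst hA; subst hB
    have := pS_step_zero R
    omega
  · subst hA; subst hB
    have := pS_step_mid L x R
    omega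

/-! ### Forward direction -/

lemma removable_good {A : List Bool} (h : Removable A) :
    pS A % 3 = 0 ∨ pS A % 3 = 1 := by
  unfold Removable Reducible at h
  induction h using Relation.ReflTransGen.head_induction_on with
  | refl => left; decide
  | head hstep _ ih => exact (ngStep_pS hstep).mpr ih

/-! ### Backward direction -/

lemma exists_first_true {A : List Bool} (h : true ∈ A) :
    ∃ k R, A = List.replicate k false ++ true :: R := by
  induction A with
  | nil => simp at h
  | cons a A' ih =>
    cases a
    · have h' : true ∈ A' := by simpa using h
      obtain ⟨k, R, hkR⟩ := ih h'
      exact ⟨k + 1, R, by rw [List.replicate_succ, hkR]; rfl⟩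
    · exact ⟨0, A', by simp⟩

lemma progress {A : List Bool} (h : true ∈ A) (hne : A ≠ [true, true]) :
    ∃ B, ngStep A B ∧ (B = [] ∨ true ∈ B) := by
  obtain ⟨k, R, hA⟩ := exists_first_true h
  cases k with
  | succ k' =>
    -- A = replicate k' false ++ false :: true :: R
    refine ⟨List.replicate k' false ++ (!false) :: ngFlip R 0, ?_, ?_⟩
    · rw [hA, List.replicate_succ']
      have : List.replicate k' false ++ [false] ++ true :: R
          = List.replicate k' false ++ false :: true :: R := by simp
      rw [this]
      exact ngStep_mid _ false R
    · right; simp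
  | zero =>
    simp only [List.replicate_zero, List.nil_append] at hA
    subst hA
    cases R with
    | nil => exact ⟨ngFlip [] 0, ngStep_zero [], Or.inl (ngFlip_nil 0)⟩
    | cons y R₁ =>
      cases y
      · -- true :: false :: R₁ → true :: R₁
        exact ⟨ngFlip (false :: R₁) 0, ngStep_zero _, by
          right; rw [ngFlip_cons_zero]; simp⟩
      · cases R₁ with
        | nil => exact absurd rfl hne
        | cons z R₂ =>
          cases z
          · -- true :: true :: false :: R₂, move at 1
            refine ⟨[] ++ (!true) :: ngFlip (false :: R₂) 0, ngStep_mid [] true _, ?_⟩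
            right; rw [ngFlip_cons_zero]; simp
          · -- true :: true :: true :: R₂, move at 0
            refine ⟨ngFlip (true :: true :: R₂) 0, ngStep_zero _, ?_⟩
            right; rw [ngFlip_cons_zero]; simp
    
lemma ngStep_length {A B : List Bool} (h : ngStep A B) : B.length + 1 = A.length := by
  obtain ⟨i, hi, _, hB⟩ := h
  have l1 : (ngFlip (ngFlip A (i+1)) (i-1)).length = A.length := by
    simp [ngFlip]
  rw [hB, List.length_eraseIdx, l1, if_pos hi]
  omega

lemma good_removable : ∀ n (A : List Bool), A.length = n → true ∈ A →
    (pS A % 3 = 0 ∨ pS A % 3 = 1) → Removable A := by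
  intro n
  induction n using Nat.strong_induction_on with
  | _ n ih =>
    intro A hlen hmem hgood
    have hne : A ≠ [true, true] := by
      rintro rfl
      revert hgood; decide
    obtain ⟨B, hstep, hB⟩ := progress hmem hne
    have hBgood := (ngStep_pS hstep).mp hgood
    rcases hB with rfl | hBmem
    · exact Relation.ReflTransGen.single hstep
    · have hBlen : B.length < n := by
        have := ngStep_length hstep; omega
      have hrem : Removable B := ih B.length hBlen B rfl hBmem hBgood
      exact Relation.ReflTransGen.head hstep hrem

/-- A coin sequence with at least one heads-up coin is removable in the no-gaps
game iff its parity sum is `≡ 0` or `1 (mod 3)`. -/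
theorem removable_iff_pS (A : List Bool) (hA : true ∈ A) :
    Removable A ↔ (pS A % 3 = 0 ∨ pS A % 3 = 1) := by
  constructor
  · exact removable_good
  · exact good_removable A.length A rfl hA
end
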